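/- A bounded linear operator T : X → Y is p-summing if and only if T∘S is p-summing for every bounded linear operator S : ℓ^q → X, where 1/p + 1/q = 1. -/

import Mathlib

/-!
Composing with `S` multiplies the weak `ℓ^p` norm `sup_{‖f‖ ≤ 1} (∑ |f xᵢ|^p)^{1/p}` of a finite
family by at most `‖S‖`, which gives the forward direction. Conversely, a family `x₁, …, xₙ` in `X`
is the image of the unit vectors of `ℓ^q` under `S a = ∑ aᵢ xᵢ`, whose norm is at most the weak
`ℓ^p` norm of `x` by Hölder's inequality, while the unit vectors themselves have weak `ℓ^p` norm at
most `1` by the equality case of Hölder's inequality. The uniform boundedness principle on the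
Banach space of operators `ℓ^q → X` turns the `p`-summing constants of the `T ∘ S` into a uniform
bound `C ‖S‖` on the unit vectors, so `T` is `p`-summing with constant `C`.
-/

open Finset

/-- `T` is `p`-summing with constant `c`. -/
def IsPSumming {X Y : Type} [NormedAddCommGroup X] [NormedSpace ℝ X]
    [NormedAddCommGroup Y] [NormedSpace ℝ Y]
    (p : ℝ) (T : X →L[ℝ] Y) (c : ℝ) : Prop :=
  ∀ (n : ℕ) (x : Fin n → X),
    (∑ i, ‖T (x i)‖ ^ p) ^ (1 / p) ≤
      c * ⨆ f : {f : X →L[ℝ] ℝ // ‖f‖ ≤ 1}, (∑ i, |f.1 (x i)| ^ p) ^ (1 / p)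

lemma rpow_sum_mul_rpow_one_div {ι : Type*} (s : Finset ι) {p c : ℝ} (hp : p ≠ 0) (hc : 0 ≤ c)
    {a : ι → ℝ} (ha : ∀ i, 0 ≤ a i) :
    (∑ i ∈ s, (c * a i) ^ p) ^ (1 / p) = c * (∑ i ∈ s, a i ^ p) ^ (1 / p) := by
  simp_rw [Real.mul_rpow hc (ha _), ← mul_sum]
  rw [Real.mul_rpow (by positivity) (sum_nonneg fun i _ => Real.rpow_nonneg (ha i) _), one_div,
    Real.rpow_rpow_inv hc hp]

lemma Real.HolderConjugate.exists_mul_eq_and_abs_rpow_eq {p q : ℝ} (hpq : p.HolderConjugate q)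
    (b : ℝ) : ∃ a : ℝ, a * b = |b| ^ p ∧ |a| ^ q = |b| ^ p := by
  rcases eq_or_ne b 0 with rfl | hb
  · exact ⟨0, by simp [Real.zero_rpow hpq.ne_zero, Real.zero_rpow hpq.symm.ne_zero]⟩
  have hsign : |(SignType.sign b : ℝ)| = 1 := by rcases hb.lt_or_gt with h | h <;> simp [h]
  refine ⟨SignType.sign b * |b| ^ (p - 1), ?_, ?_⟩
  · rw [mul_right_comm, sign_mul_self, Real.rpow_sub_one (abs_ne_zero.2 hb),
      mul_div_cancel₀ _ (abs_ne_zero.2 hb)]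
  · rw [abs_mul, hsign, one_mul, abs_of_nonneg (by positivity), ← Real.rpow_mul (abs_nonneg b),
      hpq.sub_one_mul_conj]

lemma lp.norm_sum_single_fin {Y : Type*} [NormedAddCommGroup Y] {p : ENNReal}
    (hp : 0 < p.toReal) {n : ℕ} (y : Fin n → Y) :
    ‖∑ i : Fin n, lp.single (E := fun _ : ℕ => Y) p (i : ℕ) (y i)‖ ^ p.toReal =
      ∑ i, ‖y i‖ ^ p.toReal := by
  have := lp.norm_sum_single (E := fun _ : ℕ => Y) hp (Function.extend Fin.val y 0) (range n)
  simpa only [← Fin.sum_univ_eq_sum_range, Fin.val_injective.extend_apply] using this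

section WeakLpNorm

variable {X : Type*} [NormedAddCommGroup X] [NormedSpace ℝ X] {p : ℝ} {n : ℕ}

/-- `IsPSumming p T c` unfolds to `∀ n x, (∑ i, ‖T (x i)‖ ^ p) ^ (1 / p) ≤ c * weakLpNorm p x`. -/
noncomputable def weakLpNorm (p : ℝ) (x : Fin n → X) : ℝ :=
  ⨆ f : {f : X →L[ℝ] ℝ // ‖f‖ ≤ 1}, (∑ i, |f.1 (x i)| ^ p) ^ (1 / p)

lemma weakLpNorm_nonneg (p : ℝ) (x : Fin n → X) : 0 ≤ weakLpNorm p x :=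
  Real.iSup_nonneg fun _ => by positivity

lemma rpow_sum_abs_apply_le_weakLpNorm (hp : 0 < p) (x : Fin n → X) {f : X →L[ℝ] ℝ}
    (hf : ‖f‖ ≤ 1) : (∑ i, |f (x i)| ^ p) ^ (1 / p) ≤ weakLpNorm p x := by
  refine le_ciSup (f := fun f : {f : X →L[ℝ] ℝ // ‖f‖ ≤ 1} => (∑ i, |f.1 (x i)| ^ p) ^ (1 / p))
    ⟨(∑ i, ‖x i‖ ^ p) ^ (1 / p), ?_⟩ ⟨f, hf⟩
  rintro - ⟨g, rfl⟩
  dsimp only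
  gcongr with i
  exact g.1.le_of_opNorm_le g.2 (x i) |>.trans_eq (one_mul _)

lemma rpow_sum_abs_apply_le_norm_mul_weakLpNorm (hp : 0 < p) (x : Fin n → X) (f : X →L[ℝ] ℝ) :
    (∑ i, |f (x i)| ^ p) ^ (1 / p) ≤ ‖f‖ * weakLpNorm p x := by
  rcases eq_or_ne f 0 with rfl | hf
  · simp [Real.zero_rpow hp.ne', Real.zero_rpow (inv_pos.2 hp).ne']
  have hf' : 0 < ‖f‖ := norm_pos_iff.2 hf
  have hunit : ‖‖f‖⁻¹ • f‖ ≤ 1 := by rw [norm_smul, norm_inv, norm_norm, inv_mul_cancel₀ hf'.ne']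
  have := rpow_sum_abs_apply_le_weakLpNorm hp x hunit
  simp only [smul_apply, smul_eq_mul, abs_mul, abs_inv, abs_norm] at this
  rw [rpow_sum_mul_rpow_one_div _ hp.ne' (by positivity) fun i => abs_nonneg _] at this
  rwa [← inv_mul_le_iff₀ hf']

lemma weakLpNorm_comp_le (hp : 0 < p) {Z : Type*} [NormedAddCommGroup Z] [NormedSpace ℝ Z]
    (S : Z →L[ℝ] X) (z : Fin n → Z) :
    weakLpNorm p (fun i => S (z i)) ≤ ‖S‖ * weakLpNorm p z := by
  refine Real.iSup_le (fun f => ?_) (by positivity [weakLpNorm_nonneg p z])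
  calc (∑ i, |f.1 (S (z i))| ^ p) ^ (1 / p) ≤ ‖f.1.comp S‖ * weakLpNorm p z :=
        rpow_sum_abs_apply_le_norm_mul_weakLpNorm hp z (f.1.comp S)
    _ ≤ ‖S‖ * weakLpNorm p z := by
        gcongr
        · exact weakLpNorm_nonneg p z
        exact (f.1.opNorm_comp_le S).trans (mul_le_of_le_one_left (norm_nonneg S) f.2)

lemma norm_sum_smul_le_weakLpNorm {q : ℝ} (hpq : p.HolderConjugate q) (a : Fin n → ℝ)
    (x : Fin n → X) :
    ‖∑ i, a i • x i‖ ≤ (∑ i, |a i| ^ q) ^ (1 / q) * weakLpNorm p x := by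
  refine NormedSpace.norm_le_dual_bound ℝ _ (by positivity [weakLpNorm_nonneg p x]) fun f => ?_
  simp only [map_sum, map_smul, smul_eq_mul, Real.norm_eq_abs]
  calc |∑ i, a i * f (x i)| ≤ ∑ i, |a i| * |f (x i)| :=
        (abs_sum_le_sum_abs _ _).trans_eq (by simp only [abs_mul])
    _ ≤ (∑ i, |a i| ^ q) ^ (1 / q) * (∑ i, |f (x i)| ^ p) ^ (1 / p) := by
        simpa only [abs_abs, mul_comm]
          using Real.inner_le_Lp_mul_Lq univ (fun i => |f (x i)|) (fun i => |a i|) hpq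
    _ ≤ (∑ i, |a i| ^ q) ^ (1 / q) * (‖f‖ * weakLpNorm p x) := by
        gcongr
        exact rpow_sum_abs_apply_le_norm_mul_weakLpNorm hpq.pos x f
    _ = _ := by ring

end WeakLpNorm

section SequenceSpace

variable {p q : ℝ} [Fact (1 ≤ ENNReal.ofReal q)]

local notation "ℓq" => lp (fun _ : ℕ => ℝ) (ENNReal.ofReal q)

lemma weakLpNorm_lpSingle_le_one (hpq : p.HolderConjugate q) (n : ℕ) :
    weakLpNorm p (fun i : Fin n => (lp.single (ENNReal.ofReal q) (i : ℕ) 1 : ℓq)) ≤ 1 := by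
  have hq : (ENNReal.ofReal q).toReal = q := ENNReal.toReal_ofReal hpq.symm.nonneg
  refine Real.iSup_le (fun g => ?_) zero_le_one
  set b : ℕ → ℝ := fun j => g.1 (lp.single (ENNReal.ofReal q) j 1)
  choose a hab haq using fun j => hpq.exists_mul_eq_and_abs_rpow_eq (b j)
  set A := ∑ j ∈ range n, |b j| ^ p
  set v : ℓq := ∑ j ∈ range n, lp.single (ENNReal.ofReal q) j (a j)
  have hgv : g.1 v = A := by
    refine (map_sum _ _ _).trans (sum_congr rfl fun j _ => ?_)
    rw [← hab, ← smul_eq_mul, ← map_smul, ← lp.single_smul, smul_eq_mul, mul_one]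
  have hv : ‖v‖ = A ^ (1 / q) := by
    have hsum :=
      lp.norm_sum_single (E := fun _ : ℕ => ℝ) (by rw [hq]; exact hpq.symm.pos) a (range n)
    rw [hq] at hsum
    rw [← Real.rpow_rpow_inv (norm_nonneg v) hpq.symm.ne_zero, ← one_div, hsum]
    simp only [Real.norm_eq_abs, haq, A]
  have hA : A ≤ A ^ (1 / q) := calc
    A = g.1 v := hgv.symm
    _ ≤ ‖g.1‖ * ‖v‖ := (le_abs_self _).trans (g.1.le_opNorm v)
    _ ≤ A ^ (1 / q) := hv ▸ mul_le_of_le_one_left (norm_nonneg v) g.2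
  have hA1 : A ≤ 1 := not_lt.1 fun h => (Real.rpow_lt_self_of_one_lt h
    ((div_lt_one hpq.symm.pos).2 hpq.symm.lt)).not_ge hA
  rw [Fin.sum_univ_eq_sum_range (fun j => |b j| ^ p)]
  exact Real.rpow_le_one (by positivity) hA1 (by positivity [hpq.pos])

lemma exists_clm_lpSingle_eq (hpq : p.HolderConjugate q) {X : Type*} [NormedAddCommGroup X]
    [NormedSpace ℝ X] {n : ℕ} (x : Fin n → X) :
    ∃ S : ℓq →L[ℝ] X, ‖S‖ ≤ weakLpNorm p x ∧
      ∀ i : Fin n, S (lp.single (ENNReal.ofReal q) (i : ℕ) 1) = x i := by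
  have hq : (ENNReal.ofReal q).toReal = q := ENNReal.toReal_ofReal hpq.symm.nonneg
  let S : ℓq →L[ℝ] X := ∑ i : Fin n, (lp.evalCLM ℝ (fun _ : ℕ => ℝ) _ (i : ℕ)).smulRight (x i)
  have hS (a : ℓq) : S a = ∑ i : Fin n, a i • x i := by simp [S, lp.evalCLM]
  have hcoord (a : ℓq) : (∑ i : Fin n, |a i| ^ q) ^ (1 / q) ≤ ‖a‖ := by
    have hsum := lp.sum_rpow_le_norm_rpow (by rw [hq]; exact hpq.symm.pos) a (range n)
    rw [hq, ← Fin.sum_univ_eq_sum_range (fun j => ‖a j‖ ^ q)] at hsum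
    calc (∑ i : Fin n, |a i| ^ q) ^ (1 / q) ≤ (‖a‖ ^ q) ^ (1 / q) :=
          Real.rpow_le_rpow (by positivity) hsum (by positivity [hpq.symm.pos])
      _ = ‖a‖ := by rw [one_div, Real.rpow_rpow_inv (norm_nonneg a) hpq.symm.ne_zero]
  refine ⟨S, S.opNorm_le_bound (weakLpNorm_nonneg p x) fun a => ?_, fun i => ?_⟩
  · rw [hS, mul_comm]
    exact (norm_sum_smul_le_weakLpNorm hpq _ x).trans
      (by gcongr; exacts [weakLpNorm_nonneg p x, hcoord a])
  · simp [hS, Pi.single_apply, Fin.val_inj]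

end SequenceSpace

section PSumming

variable {X Y Z : Type} [NormedAddCommGroup X] [NormedSpace ℝ X] [NormedAddCommGroup Y]
  [NormedSpace ℝ Y] [NormedAddCommGroup Z] [NormedSpace ℝ Z] {p c : ℝ}

lemma IsPSumming.comp (hp : 0 < p) (hc : 0 ≤ c) {T : X →L[ℝ] Y} (hT : IsPSumming p T c)
    (S : Z →L[ℝ] X) : IsPSumming p (T.comp S) (c * ‖S‖) := fun n z => calc
  _ ≤ c * weakLpNorm p (fun i => S (z i)) := hT n _
  _ ≤ c * (‖S‖ * weakLpNorm p z) := by gcongr; exact weakLpNorm_comp_le hp S z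
  _ = c * ‖S‖ * weakLpNorm p z := (mul_assoc _ _ _).symm

lemma exists_bound_of_forall_isPSumming_comp [CompleteSpace X] (hp : 1 ≤ p) (T : X →L[ℝ] Y)
    (h : ∀ S : Z →L[ℝ] X, ∃ c, IsPSumming p (T.comp S) c) :
    ∃ C, ∀ (S : Z →L[ℝ] X) (n : ℕ) (z : Fin n → Z), weakLpNorm p z ≤ 1 →
      (∑ i, ‖T (S (z i))‖ ^ p) ^ (1 / p) ≤ C * ‖S‖ := by
  have : Fact (1 ≤ ENNReal.ofReal p) := ⟨by simpa using hp⟩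
  have hp' : (ENNReal.ofReal p).toReal = p := ENNReal.toReal_ofReal (by linarith)
  let Φ (z : Σ n, Fin n → Z) : (Z →L[ℝ] X) →L[ℝ] lp (fun _ : ℕ => Y) (ENNReal.ofReal p) :=
    ∑ i : Fin z.1, lp.singleContinuousLinearMap ℝ (fun _ : ℕ => Y) _ (i : ℕ) ∘L
      T ∘L ContinuousLinearMap.apply ℝ X (z.2 i)
  have hΦ (z : Σ n, Fin n → Z) (S : Z →L[ℝ] X) :
      ‖Φ z S‖ = (∑ i, ‖T (S (z.2 i))‖ ^ p) ^ (1 / p) := by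
    have hsum := lp.norm_sum_single_fin (p := ENNReal.ofReal p) (by rw [hp']; linarith)
      fun i => T (S (z.2 i))
    rw [hp'] at hsum
    rw [← hsum, one_div, Real.rpow_rpow_inv (norm_nonneg _) (by linarith)]
    simp [Φ]
  have hbdd (S : Z →L[ℝ] X) :
      ∃ C, ∀ z : {z : Σ n, Fin n → Z // weakLpNorm p z.2 ≤ 1}, ‖Φ z.1 S‖ ≤ C := by
    obtain ⟨c, hc⟩ := h S
    refine ⟨|c|, fun z => (hΦ _ _).trans_le <| (hc _ z.1.2).trans ?_⟩
    exact (mul_le_mul_of_nonneg_right (le_abs_self c) (weakLpNorm_nonneg p _)).trans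
      (mul_le_of_le_one_right (abs_nonneg c) z.2)
  obtain ⟨C, hC⟩ := banach_steinhaus hbdd
  refine ⟨C, fun S n z hz => (hΦ ⟨n, z⟩ S).symm.trans_le ?_⟩
  exact (Φ _).le_opNorm S |>.trans (by gcongr; exact hC ⟨⟨n, z⟩, hz⟩)

end PSumming

theorem pSumming_iff_comp_pSumming_general
    {X Y : Type} [NormedAddCommGroup X] [NormedSpace ℝ X] [CompleteSpace X]
    [NormedAddCommGroup Y] [NormedSpace ℝ Y]
    (p q : ℝ) (hp : 1 < p) (hpq : 1 / p + 1 / q = 1)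
    [Fact (1 ≤ ENNReal.ofReal q)]
    (T : X →L[ℝ] Y) :
    (∃ c : ℝ, 0 ≤ c ∧ IsPSumming p T c) ↔
      (∀ S : lp (fun _ : ℕ => ℝ) (ENNReal.ofReal q) →L[ℝ] X,
        ∃ c : ℝ, 0 ≤ c ∧ IsPSumming p (T.comp S) c) := by
  have hpq' : p.HolderConjugate q :=
    Real.holderConjugate_iff.2 ⟨hp, by simpa only [one_div] using hpq⟩
  constructor
  · rintro ⟨c, hc, hT⟩ S
    exact ⟨c * ‖S‖, by positivity, hT.comp hpq'.pos hc S⟩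
  · intro h
    obtain ⟨C, hC⟩ := exists_bound_of_forall_isPSumming_comp hp.le T fun S =>
      (h S).imp fun _ => And.right
    refine ⟨max C 0, le_max_right C 0, fun n x => ?_⟩
    obtain ⟨S, hS, hSx⟩ := exists_clm_lpSingle_eq hpq' x
    calc (∑ i, ‖T (x i)‖ ^ p) ^ (1 / p)
        = (∑ i : Fin n, ‖T (S (lp.single _ (i : ℕ) 1))‖ ^ p) ^ (1 / p) := by simp only [hSx]
      _ ≤ C * ‖S‖ := hC S n _ (weakLpNorm_lpSingle_le_one hpq' n)
      _ ≤ max C 0 * weakLpNorm p x := by gcongr; exact le_max_left C 0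

/-- `T : X → Y` is `p`-summing iff `T ∘ S` is `p`-summing for every bounded
operator `S : ℓ^q → X`, where `1/p + 1/q = 1`. -/
theorem pSumming_iff_comp_pSumming
    {X Y : Type} [NormedAddCommGroup X] [NormedSpace ℝ X] [CompleteSpace X]
    [NormedAddCommGroup Y] [NormedSpace ℝ Y] [CompleteSpace Y]
    (p q : ℝ) (hp : 1 < p) (hq : 1 < q) (hpq : 1 / p + 1 / q = 1)
    [Fact (1 ≤ ENNReal.ofReal q)]
    (T : X →L[ℝ] Y) :
    (∃ c : ℝ, 0 ≤ c ∧ IsPSumming p T c) ↔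
      (∀ S : lp (fun _ : ℕ => ℝ) (ENNReal.ofReal q) →L[ℝ] X,
        ∃ c : ℝ, 0 ≤ c ∧ IsPSumming p (T.comp S) c) :=
  pSumming_iff_comp_pSumming_general p q hp hpq T
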